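/- arXiv:1801.08354 — 7 statements merged into one kernel-verified Lean document; each statement's English description precedes it below -/
import Mathlib

section
/- Let M ≥ 1, L ≥ 1, and fix x : Fin L → ZMod M. If s is drawn uniformly at random from the (nonempty, finite) set {s : Fin L → ZMod M | ∑ i, s i = 0}, then the distribution of the report vector c = (fun i => x i + s i) is the uniform distribution on the set {c : Fin L → ZMod M | ∑ i, c i = ∑ i, x i}. Formally, the pushforward of the uniform PMF on {s | ∑ i, s i = 0} under s ↦ x + s equals the uniform PMF on {c | ∑ i, c i = ∑ i, x i}. -/
/-- With masks drawn uniformly from the vectors summing to zero, the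
report vector `c = x + s` is uniformly distributed over the vectors whose
coordinates sum to `∑ i, x i`. -/
theorem masked_reports_uniform (M L : ℕ) [NeZero M] (hL : 1 ≤ L)
    (x : Fin L → ZMod M)
    (hS : (Finset.univ.filter
        (fun s : Fin L → ZMod M => ∑ i, s i = 0)).Nonempty)
    (hC : (Finset.univ.filter
        (fun c : Fin L → ZMod M => ∑ i, c i = ∑ i, x i)).Nonempty) :
    (PMF.uniformOfFinset _ hS).map (fun s => x + s) =
      PMF.uniformOfFinset _ hC := by
  have hcard : (Finset.univ.filter
      (fun s : Fin L → ZMod M => ∑ i, s i = 0)).card =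
      (Finset.univ.filter
      (fun c : Fin L → ZMod M => ∑ i, c i = ∑ i, x i)).card := by
    apply Finset.card_bij (fun s _ => x + s)
    · intro s hs
      simp only [Finset.mem_filter, Finset.mem_univ, true_and] at hs ⊢
      simp [Finset.sum_add_distrib, hs]
    · intro a ha b hb hab
      simpa using hab
    · intro c hc
      refine ⟨c - x, ?_, by abel⟩
      simp only [Finset.mem_filter, Finset.mem_univ, true_and] at hc ⊢
      simp [Finset.sum_sub_distrib, hc]
  ext c
  rw [PMF.map_apply]
  rw [tsum_eq_single (c - x) (by
    intro s hs
    rw [if_neg]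
    intro h
    exact hs (by rw [h]; abel))]
  rw [if_pos (by abel)]
  rw [PMF.uniformOfFinset_apply, PMF.uniformOfFinset_apply, hcard]
  congr 1
  simp [Pi.sub_apply, Finset.sum_sub_distrib, sub_eq_zero]
end

section
/- Let M ≥ 1, L ≥ 1, and let x, x' : Fin L → ZMod M satisfy ∑ i, x i = ∑ i, x' i. Then the distribution of the masked report vector under x equals the distribution under x': the pushforward of the uniform PMF on {s : Fin L → ZMod M | ∑ i, s i = 0} under s ↦ x + s equals its pushforward under s ↦ x' + s. Hence the reports reveal nothing about the per-period bills beyond the total monthly bill. -/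
/-- Report distributions coincide for any two per-period bill vectors
with the same total; the reports reveal nothing beyond the total bill. -/
theorem masked_reports_indistinguishable (M L : ℕ) [NeZero M] (hL : 1 ≤ L)
    (x x' : Fin L → ZMod M) (hxx' : ∑ i, x i = ∑ i, x' i)
    (hS : (Finset.univ.filter
        (fun s : Fin L → ZMod M => ∑ i, s i = 0)).Nonempty) :
    (PMF.uniformOfFinset _ hS).map (fun s => x + s) =
      (PMF.uniformOfFinset _ hS).map (fun s => x' + s) := by
  ext a
  rw [PMF.map_apply, PMF.map_apply]
  rw [tsum_eq_single (a - x) (by intro s hs; rw [if_neg]; intro h; exact hs (by rw [h]; abel)),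
      tsum_eq_single (a - x') (by intro s hs; rw [if_neg]; intro h; exact hs (by rw [h]; abel))]
  rw [if_pos (by abel), if_pos (by abel)]
  simp only [PMF.uniformOfFinset_apply, Finset.mem_filter, Finset.mem_univ, true_and]
  congr 1
  simp [Finset.sum_sub_distrib, sub_eq_zero, hxx']
end

section
/- In the market clearance algorithm, the accepted bids form a prefix of the price-sorted bid list: if a j = true and 1 ≤ i ≤ j, then a i = true; equivalently, if a i = false and i ≤ j ≤ n then a j = false. -/
/-- Accepted bids form a prefix of the price-sorted bid list. -/
theorem accepted_bids_prefix (n : ℕ) (q : ℕ → ℕ) (d : ℕ → Bool)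
    (δ : ℕ) (hδ : δ = ∑ j ∈ Finset.Icc 1 n, if d j then q j else 0)
    (ν : ℕ → ℕ) (hν0 : ν 0 = 0)
    (hν : ∀ j, ν (j + 1) = ν j + (if ν j < δ then q (j + 1) else 0))
    (a : ℕ → Bool) (ha : ∀ j, a (j + 1) = decide (ν j < δ)) :
    ∀ i j, 1 ≤ i → i ≤ j → j ≤ n → a j = true → a i = true := by
  have hmono : Monotone ν := monotone_nat_of_le_succ fun k => by
    rw [hν k]; exact Nat.le_add_right _ _
  rintro ⟨⟩ ⟨⟩ hi hij hjn haj
  · exact absurd hi (by omega)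
  · exact absurd hij (by omega)
  · exact absurd hi (by omega)
  · rename_i i j
    rw [ha] at haj ⊢
    simp only [decide_eq_true_eq] at haj ⊢
    exact lt_of_le_of_lt (hmono (by omega)) haj
end

section
/- In the market clearance algorithm, bid j (1 ≤ j ≤ n) is accepted if and only if the total quantity of all preceding bids is strictly less than the aggregate demand: a j = true ↔ ∑_{k=1}^{j-1} q k < δ. Consequently, for every accepted bid j one has ν (j-1) = ∑_{k=1}^{j-1} q k. -/
/-- Bid `j` is accepted iff the total quantity of all preceding bids is
strictly below the aggregate demand; also `ν (j-1)` equals that prefix sum on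
accepted bids. -/
theorem acceptance_characterization (n : ℕ) (q : ℕ → ℕ) (d : ℕ → Bool)
    (δ : ℕ) (hδ : δ = ∑ j ∈ Finset.Icc 1 n, if d j then q j else 0)
    (ν : ℕ → ℕ) (hν0 : ν 0 = 0)
    (hν : ∀ j, ν (j + 1) = ν j + (if ν j < δ then q (j + 1) else 0))
    (a : ℕ → Bool) (ha : ∀ j, a (j + 1) = decide (ν j < δ)) :
    ∀ j, 1 ≤ j → j ≤ n →
      ((a j = true ↔ ∑ k ∈ Finset.Icc 1 (j - 1), q k < δ) ∧
       (a j = true → ν (j - 1) = ∑ k ∈ Finset.Icc 1 (j - 1), q k)) := by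
  have inv : ∀ m, ν m ≤ ∑ k ∈ Finset.Icc 1 m, q k ∧
      (ν m < δ → ν m = ∑ k ∈ Finset.Icc 1 m, q k) := by
    intro m
    induction m with
    | zero => simp [hν0]
    | succ m ih =>
      have hsum : ∑ k ∈ Finset.Icc 1 (m + 1), q k
          = (∑ k ∈ Finset.Icc 1 m, q k) + q (m + 1) := by
        rw [← Finset.sum_Icc_succ_top (Nat.le_add_left 1 m)]
      by_cases h : ν m < δ
      · have := ih.2 h
        constructor
        · rw [hν m, if_pos h, this, hsum]
        · intro _; rw [hν m, if_pos h, this, hsum]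
      · have hν1 : ν (m + 1) = ν m := by rw [hν m, if_neg h]; simp
        constructor
        · rw [hν1, hsum]; exact le_trans ih.1 (Nat.le_add_right _ _)
        · intro hlt; rw [hν1] at hlt; exact absurd hlt h
  intro j hj _
  obtain ⟨m, rfl⟩ : ∃ m, j = m + 1 := ⟨j - 1, (Nat.succ_pred_eq_of_pos hj).symm⟩
  simp only [Nat.add_sub_cancel]
  constructor
  · rw [ha m]
    constructor
    · intro h
      have hlt : ν m < δ := by simpa using h
      rw [← (inv m).2 hlt]; exact hlt
    · intro h
      simp only [decide_eq_true_eq]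
      exact lt_of_le_of_lt (inv m).1 h
  · intro h
    rw [ha m] at h
    exact (inv m).2 (by simpa using h)
end

section
/- In the market clearance algorithm, the aggregate demand is always fully matched: the final cumulative accepted volume satisfies ν n ≥ δ. (This uses that δ = ∑_{j with d j = true} q j ≤ ∑_{j=1}^{n} q j.) -/
/-- The aggregate demand is always fully matched: `ν n ≥ δ`. -/
theorem demand_fully_matched (n : ℕ) (q : ℕ → ℕ) (d : ℕ → Bool)
    (δ : ℕ) (hδ : δ = ∑ j ∈ Finset.Icc 1 n, if d j then q j else 0)
    (ν : ℕ → ℕ) (hν0 : ν 0 = 0)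
    (hν : ∀ j, ν (j + 1) = ν j + (if ν j < δ then q (j + 1) else 0)) :
    δ ≤ ν n := by
  have key : ∀ j, δ ≤ ν j ∨ ν j = ∑ i ∈ Finset.Icc 1 j, q i := by
    intro j
    induction j with
    | zero => right; simp [hν0]
    | succ k ih =>
      rcases ih with h | h
      · left
        rw [hν k]
        exact le_trans h (Nat.le_add_right _ _)
      · by_cases hc : ν k < δ
        · right
          rw [hν k, if_pos hc, h, Finset.sum_Icc_succ_top (by omega)]
        · left
          rw [hν k, if_neg hc]
          omega
  rcases key n with h | h
  · exact h
  · rw [h, hδ]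
    exact Finset.sum_le_sum (fun i _ => by split <;> simp)
end

section
/- In the market clearance algorithm, if n ≥ 1 then the overshoot of the matched volume over the aggregate demand is bounded by the largest single bid quantity: ν n < δ + max_{1 ≤ j ≤ n} q j, provided at least one bid is accepted (a 1 = true). -/
/-- The overshoot of the matched volume over the aggregate demand is
bounded by the largest single bid quantity, provided at least one bid is accepted. -/
theorem overshoot_bounded (n : ℕ) (hn : 1 ≤ n) (q : ℕ → ℕ) (d : ℕ → Bool)
    (δ : ℕ) (hδ : δ = ∑ j ∈ Finset.Icc 1 n, if d j then q j else 0)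
    (ν : ℕ → ℕ) (hν0 : ν 0 = 0)
    (hν : ∀ j, ν (j + 1) = ν j + (if ν j < δ then q (j + 1) else 0))
    (a : ℕ → Bool) (ha : ∀ j, a (j + 1) = decide (ν j < δ))
    (hacc : a 1 = true) :
    ν n < δ + (Finset.Icc 1 n).sup q := by
  have h0 : ν 0 < δ := by
    have := ha 0
    rw [hacc] at this
    exact of_decide_eq_true this.symm
  have key : ∀ j, 1 ≤ j → j ≤ n → ν j < δ + (Finset.Icc 1 n).sup q := by
    intro j
    induction j with
    | zero => intro h; omega
    | succ k ih =>
      intro _ hkn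
      have hmem : k + 1 ∈ Finset.Icc 1 n := by
        simp [Nat.succ_le_iff]; omega
      have hq : q (k + 1) ≤ (Finset.Icc 1 n).sup q := Finset.le_sup hmem
      rcases Nat.eq_zero_or_pos k with rfl | hk
      · rw [hν 0, if_pos h0, hν0]
        omega
      · have ihk := ih hk (by omega)
        rw [hν k]
        split
        · omega
        · omega
  exact key n hn le_rfl
end

section
/- Assume the bid prices p : Fin n → ℕ are sorted nondecreasingly (i ≤ j implies p i ≤ p j) and that at least one supply bid is accepted. Let j* be the largest index with a j* = true and d j* = false, and let the trading price be σ = p j* (the price of the last accepted supply bid, as computed by the algorithm). Then: (i) every accepted supply bid j (a j = true, d j = false) satisfies p j ≤ σ; (ii) every supply bid j with p j < σ is accepted (a j = true); and (iii) every supply bid j with p j > σ is rejected (a j = false). -/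
/-- Properties of the trading price `σ`, the price of the last
accepted supply bid: accepted supply bids cost at most `σ`, supply bids strictly
cheaper than `σ` are accepted, and supply bids strictly more expensive than `σ`
are rejected. -/
theorem trading_price_properties (n : ℕ) (q : ℕ → ℕ) (d : ℕ → Bool) (p : ℕ → ℕ)
    (hp : ∀ i j, 1 ≤ i → i ≤ j → j ≤ n → p i ≤ p j)
    (δ : ℕ) (hδ : δ = ∑ j ∈ Finset.Icc 1 n, if d j then q j else 0)
    (ν : ℕ → ℕ) (hν0 : ν 0 = 0)
    (hν : ∀ j, ν (j + 1) = ν j + (if ν j < δ then q (j + 1) else 0))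
    (a : ℕ → Bool) (ha : ∀ j, a (j + 1) = decide (ν j < δ))
    (jstar : ℕ) (hj1 : 1 ≤ jstar) (hjn : jstar ≤ n)
    (hja : a jstar = true) (hjd : d jstar = false)
    (hjmax : ∀ j, jstar < j → j ≤ n → ¬(a j = true ∧ d j = false))
    (σ : ℕ) (hσ : σ = p jstar) :
    (∀ j, 1 ≤ j → j ≤ n → a j = true → d j = false → p j ≤ σ) ∧
    (∀ j, 1 ≤ j → j ≤ n → d j = false → p j < σ → a j = true) ∧
    (∀ j, 1 ≤ j → j ≤ n → d j = false → σ < p j → a j = false) := by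
  -- ν is monotone
  have hmono : Monotone ν := by
    apply monotone_nat_of_le_succ
    intro j
    rw [hν j]
    exact Nat.le_add_right _ _
  -- a is antitone on positive indices
  have hant : ∀ i j, 1 ≤ i → i ≤ j → a j = true → a i = true := by
    intro i j hi hij haj
    obtain ⟨i', rfl⟩ := Nat.exists_eq_add_of_le hi
    obtain ⟨j', rfl⟩ := Nat.exists_eq_add_of_le (le_trans hi hij)
    rw [Nat.add_comm 1 i', ha] at *
    rw [Nat.add_comm 1 j', ha] at haj
    simp only [decide_eq_true_eq] at *
    exact lt_of_le_of_lt (hmono (by omega)) haj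
  refine ⟨?_, ?_, ?_⟩
  · intro j h1 h2 haj hdj
    rw [hσ]
    by_cases hle : j ≤ jstar
    · exact hp j jstar h1 hle hjn
    · exact absurd ⟨haj, hdj⟩ (hjmax j (by omega) h2)
  · intro j h1 h2 hdj hpj
    rw [hσ] at hpj
    have hlt : j ≤ jstar := by
      by_contra hc
      exact absurd (hp jstar j hj1 (by omega) h2) (by omega)
    exact hant j jstar h1 hlt hja
  · intro j h1 h2 hdj hpj
    rw [hσ] at hpj
    have hgt : jstar < j := by
      by_contra hc
      exact absurd (hp j jstar h1 (by omega) hjn) (by omega)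
    cases hc : a j with
    | false => rfl
    | true => exact absurd ⟨hc, hdj⟩ (hjmax j hgt h2)
end
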